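/- arXiv:2506.09569 — 3 statements merged into one kernel-verified Lean document; each statement's English description precedes it below -/
import Mathlib

section
/- Let p and q be distinct primes with p ≡ 3 (mod 4) and q ≡ 3 (mod 4), and set N = pq. Let a be an integer with 0 < a < N and gcd(a, N) = 1. If x is an integer with 0 < x < N such that x² ≡ a² (mod N), x ≡ a (mod 2), and the Jacobi symbol (x/N) equals the Jacobi symbol (a/N), then x = a. In other words, among the four square roots of a² modulo N, the original a is uniquely determined by its parity and its Jacobi symbol. -/
/-- **Williams' disambiguation.** Among the four square roots of `a²` modulo
`N = pq` (with `p ≡ q ≡ 3 (mod 4)`), the original root `a` is uniquely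
determined by its parity and its Jacobi symbol. -/
theorem williams_unique_root
    (p q : ℕ) (hp : p.Prime) (hq : q.Prime) (hpq : p ≠ q)
    (hp3 : p % 4 = 3) (hq3 : q % 4 = 3)
    (N : ℕ) (hN : N = p * q)
    (a : ℤ) (ha0 : 0 < a) (haN : a < N) (hcop : IsCoprime a (N : ℤ))
    (x : ℤ) (hx0 : 0 < x) (hxN : x < N)
    (hsq : (N : ℤ) ∣ x ^ 2 - a ^ 2)
    (hparity : x % 2 = a % 2)
    (hjacobi : jacobiSym x N = jacobiSym a N) :
    x = a := by
  have hpodd : p % 2 = 1 := Nat.odd_of_mod_four_eq_three hp3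
  have hqodd : q % 2 = 1 := Nat.odd_of_mod_four_eq_three hq3
  have hNodd : Odd N := by
    rw [hN]; exact (Nat.odd_iff.2 hpodd).mul (Nat.odd_iff.2 hqodd)
  have hN0 : (0:ℤ) < N := lt_trans ha0 haN
  have hfac : x ^ 2 - a ^ 2 = (x - a) * (x + a) := by ring
  rw [hfac, hN] at hsq
  push_cast at hsq
  have hpd : (p:ℤ) ∣ (x - a) * (x + a) := dvd_trans ⟨q, rfl⟩ hsq
  have hqd : (q:ℤ) ∣ (x - a) * (x + a) := dvd_trans ⟨p, by ring⟩ hsq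
  have hpI : Prime (p:ℤ) := Nat.prime_iff_prime_int.mp hp
  have hqI : Prime (q:ℤ) := Nat.prime_iff_prime_int.mp hq
  have hpc := hpI.dvd_or_dvd hpd
  have hqc := hqI.dvd_or_dvd hqd
  have hcopI : IsCoprime (p:ℤ) (q:ℤ) := by
    rw [Int.isCoprime_iff_gcd_eq_one]
    exact_mod_cast (Nat.coprime_primes hp hq).mpr hpq
  -- tool lemma: in mixed case jacobi symbols differ
  have mixed : ∀ (r s : ℕ), r.Prime → s.Prime → s % 4 = 3 → r * s = p * q →
      (r:ℤ) ∣ x - a → (s:ℤ) ∣ x + a → jacobiSym x (r*s) = - jacobiSym a (r*s) := by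
    intro r s hr hs hs3 hrs hra hsa
    haveI : Fact r.Prime := ⟨hr⟩
    haveI : Fact s.Prime := ⟨hs⟩
    have h1 : jacobiSym x r = jacobiSym a r := by
      apply jacobiSym.mod_left'
      exact (Int.modEq_iff_dvd.mpr hra).symm
    have h2 : jacobiSym x s = jacobiSym (-a) s := by
      apply jacobiSym.mod_left'
      exact (Int.modEq_iff_dvd.mpr (by simpa using hsa)).symm
    have hsodd : Odd s := Nat.odd_of_mod_four_eq_three hs3 |> Nat.odd_iff.mpr
    have h3 : jacobiSym (-a) s = - jacobiSym a s := by
      rw [jacobiSym.neg a hsodd, ZMod.χ₄_nat_three_mod_four hs3, neg_one_mul]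
    rw [jacobiSym.mul_right, jacobiSym.mul_right, h1, h2, h3]
    ring
  rcases hpc with hp1 | hp2 <;> rcases hqc with hq1 | hq2
  · -- both divide x - a : x = a
    have : (N:ℤ) ∣ x - a := by
      rw [hN]; push_cast; exact hcopI.mul_dvd hp1 hq1
    have habs : |x - a| < N := by
      rw [abs_lt]; constructor <;> omega
    obtain ⟨k, hk⟩ := this
    have hk0 : k = 0 := by nlinarith [abs_lt.mp habs]
    rw [hk0, mul_zero] at hk
    linarith
  · -- mixed p | x - a, q | x + a
    exfalso
    have := mixed p q hp hq hq3 rfl hp1 hq2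
    rw [← hN] at this
    have hne := jacobiSym.ne_zero (Int.isCoprime_iff_gcd_eq_one.mp hcop)
    omega
  · exfalso
    have := mixed q p hq hp hp3 (by ring) hq1 hp2
    rw [Nat.mul_comm q p, ← hN] at this
    have hne := jacobiSym.ne_zero (Int.isCoprime_iff_gcd_eq_one.mp hcop)
    omega
  · -- both divide x + a : x = N - a, parity contradiction
    exfalso
    have hdvd : (N:ℤ) ∣ x + a := by
      rw [hN]; push_cast; exact hcopI.mul_dvd hp2 hq2
    obtain ⟨k, hk⟩ := hdvd
    have hk1 : k = 1 := by nlinarith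
    have hxa : x + a = N := by rw [hk, hk1, mul_one]
    have h2 : N % 2 = 1 := Nat.odd_iff.mp hNodd
    omega
end

section
/- Let p be a prime number with p ≠ 7. The polynomial x³ + x² − 2x − 1 is irreducible over the field 𝔽_p = ℤ/pℤ if and only if p is congruent to 2, 3, 4 or 5 modulo 7. (Equivalently: p is inert in the cubic field ℚ(ζ₇ + ζ₇⁻¹), the maximal real subfield of the 7th cyclotomic field, exactly for these congruence classes.) -/
/-!
A cubic has no nontrivial factorization unless it has a root, so the question is when
`f = X³ + X² - 2X - 1` has a root in `𝔽_q` (here `q = p`). The roots of `f` are the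
numbers `ζ + ζ⁻¹` with `ζ` a primitive 7th root of unity: conversely, for a root `a`, a root
`ζ` of `X² - aX + 1` in an extension is one. Such an `a = ζ + ζ⁻¹` lies in `𝔽_q` exactly
when it is fixed by the Frobenius `x ↦ x ^ q`, i.e. when `ζ ^ q` is again a root of
`X² - aX + 1`, i.e. `ζ ^ q = ζ ^ {±1}`, i.e. `q ≡ ±1 (mod 7)`.
Throughout, `ζ⁻¹` is written `ζ ^ 6`.
-/

open Polynomial

theorem FiniteField.mem_range_algebraMap_of_pow_card_eq_self {K L : Type*} [Field K] [Fintype K]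
    [Field L] [Algebra K L] [Finite L] {x : L} (hx : x ^ Fintype.card K = x) :
    x ∈ Set.range (algebraMap K L) := by
  have : FiniteDimensional K L := Module.Finite.of_finite
  refine (IsGalois.mem_range_algebraMap_iff_fixed x).2 fun σ ↦ ?_
  obtain ⟨n, rfl⟩ := (bijective_frobeniusAlgEquivOfAlgebraic_pow K L).2 σ
  rw [AlgEquiv.coe_pow, coe_frobeniusAlgEquivOfAlgebraic]
  exact Function.IsFixedPt.iterate hx n

theorem eq_or_eq_pow_six_of_add_pow_six_eq {R : Type*} [CommRing R] [IsDomain R] {z w : R}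
    (hz : z ^ 7 = 1) (hw : w ^ 7 = 1) (h : w + w ^ 6 = z + z ^ 6) : w = z ∨ w = z ^ 6 := by
  have : (w - z) * (w - z ^ 6) = 0 := by linear_combination w * h + hz - hw
  rcases mul_eq_zero.1 this with h | h
  · exact .inl (sub_eq_zero.1 h)
  · exact .inr (sub_eq_zero.1 h)

theorem IsPrimitiveRoot.cubic_add_pow_six_eq_zero {R : Type*} [CommRing R] [IsDomain R] {z : R}
    (hz : IsPrimitiveRoot z 7) :
    (z + z ^ 6) ^ 3 + (z + z ^ 6) ^ 2 - 2 * (z + z ^ 6) - 1 = 0 := by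
  have h := hz.geom_sum_eq_zero (by norm_num)
  simp only [Finset.sum_range_succ, Finset.sum_range_zero] at h
  linear_combination (z ^ 11 + 3 * z ^ 6 + z ^ 5 + z ^ 4 + 3 * z + 2) * hz.pow_eq_one + h

theorem IsPrimitiveRoot.add_pow_six_mem_range_iff {K L : Type*} [Field K] [Fintype K] [Field L]
    [Algebra K L] [Finite L] {z : L} (hz : IsPrimitiveRoot z 7) :
    z + z ^ 6 ∈ Set.range (algebraMap K L) ↔
      Fintype.card K % 7 = 1 ∨ Fintype.card K % 7 = 6 := by
  set q := Fintype.card K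
  have hpow (m n : ℕ) : z ^ m = z ^ n ↔ m % 7 = n % 7 := by
    rw [(hz.isOfFinOrder (by norm_num)).pow_inj_mod, ← hz.eq_orderOf]
  have hfrob : (z + z ^ 6) ^ q = z ^ q + (z ^ q) ^ 6 := by
    rw [pow_right_comm z q 6]
    exact map_add (FiniteField.frobeniusAlgHom K L) z (z ^ 6)
  constructor
  · rintro ⟨c, hc⟩
    have hfix : z ^ q + (z ^ q) ^ 6 = z + z ^ 6 := by
      rw [← hfrob, ← hc, ← map_pow, FiniteField.pow_card]
    have hzq : (z ^ q) ^ 7 = 1 := by rw [← pow_mul, mul_comm, pow_mul, hz.pow_eq_one, one_pow]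
    rcases eq_or_eq_pow_six_of_add_pow_six_eq hz.pow_eq_one hzq hfix with h | h
    · exact .inl ((hpow q 1).1 (by rwa [pow_one]))
    · exact .inr ((hpow q 6).1 h)
  · intro h
    refine FiniteField.mem_range_algebraMap_of_pow_card_eq_self ?_
    rcases h with h | h
    · rw [hfrob, (hpow q 1).2 h, pow_one]
    · rw [hfrob, (hpow q 6).2 h, ← pow_mul, add_comm, (hpow 36 1).2 rfl, pow_one]

theorem isPrimitiveRoot_seven_of_cubic_of_quadratic {R : Type*} [CommRing R] [IsDomain R]
    [NeZero (7 : R)] {a z : R} (ha : a ^ 3 + a ^ 2 - 2 * a - 1 = 0)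
    (hz : z ^ 2 - a * z + 1 = 0) : IsPrimitiveRoot z 7 := by
  have : Fact (Nat.Prime 7) := ⟨by norm_num⟩
  refine IsPrimitiveRoot.iff_orderOf.2 (orderOf_eq_prime ?_ ?_)
  · linear_combination (z ^ 5 + a * z ^ 4 + (a ^ 2 - 1) * z ^ 3 + (a ^ 3 - 2 * a) * z ^ 2
      + (a ^ 4 - 3 * a ^ 2 + 1) * z + (a ^ 5 - 4 * a ^ 3 + 3 * a)) * hz
      + ((a ^ 3 - a ^ 2 - 2 * a + 1) * z + (-a ^ 2 + a + 1)) * ha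
  · rintro rfl
    exact NeZero.ne (7 : R) (by linear_combination ha + (a ^ 2 + 3 * a + 4) * hz)

theorem FiniteField.exists_cubic_seven_eq_zero_iff {K : Type*} [Field K] [Fintype K]
    [NeZero (7 : K)] :
    (∃ a : K, a ^ 3 + a ^ 2 - 2 * a - 1 = 0) ↔
      Fintype.card K % 7 = 1 ∨ Fintype.card K % 7 = 6 := by
  constructor
  · rintro ⟨a, ha⟩
    let g : K[X] := X ^ 2 - C a * X + 1
    let L := g.SplittingField
    have hg : g.natDegree = 2 := by unfold g; compute_degree!
    obtain ⟨z, hz⟩ := (SplittingField.splits g).exists_eval_eq_zero <| by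
      rw [degree_map]; exact degree_ne_of_natDegree_ne (by rw [hg]; decide)
    simp only [g, eval_map_algebraMap, map_add, map_sub, map_mul, aeval_X_pow, aeval_X, aeval_C,
      map_one] at hz
    have : NeZero (7 : L) :=
      ⟨by simpa [map_ofNat] using (_root_.map_ne_zero (algebraMap K L)).2 (NeZero.ne (7 : K))⟩
    have hζ := isPrimitiveRoot_seven_of_cubic_of_quadratic
      (by simpa [map_ofNat] using congrArg (algebraMap K L) ha) hz
    refine hζ.add_pow_six_mem_range_iff.1 ⟨a, ?_⟩
    linear_combination (-z ^ 6) * hz + (z - algebraMap K L a) * hζ.pow_eq_one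
  · intro h
    let L := CyclotomicField 7 K
    have : Module.Finite K L := IsCyclotomicExtension.finite {7} K L
    have : Finite L := Module.finite_of_finite K
    have hz := IsCyclotomicExtension.zeta_spec 7 K L
    obtain ⟨c, hc⟩ := hz.add_pow_six_mem_range_iff.2 h
    refine ⟨c, (algebraMap K L).injective ?_⟩
    simpa [hc, map_ofNat] using hz.cubic_add_pow_six_eq_zero

theorem irreducible_cubic_seven_iff_not_exists {K : Type*} [Field K] :
    Irreducible (X ^ 3 + X ^ 2 - 2 * X - 1 : K[X]) ↔
      ¬∃ a : K, a ^ 3 + a ^ 2 - 2 * a - 1 = 0 := by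
  have hdeg : (X ^ 3 + X ^ 2 - 2 * X - 1 : K[X]).natDegree = 3 := by compute_degree!
  rw [irreducible_iff_roots_eq_zero_of_degree_le_three (by omega) (by omega),
    Multiset.eq_zero_iff_forall_notMem, not_exists]
  refine forall_congr' fun a ↦ ?_
  rw [mem_roots (ne_zero_of_natDegree_gt (n := 0) (by omega))]
  simp

/-- The minimal polynomial of `ζ₇ + ζ₇⁻¹` is irreducible modulo a prime
`p ≠ 7` if and only if `p ≡ 2, 3, 4, 5 (mod 7)`. -/
theorem irreducible_cubic_seven
    (p : ℕ) (hp : p.Prime) (hp7 : p ≠ 7) :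
    Irreducible (X ^ 3 + X ^ 2 - 2 * X - 1 : (ZMod p)[X]) ↔
      (p % 7 = 2 ∨ p % 7 = 3 ∨ p % 7 = 4 ∨ p % 7 = 5) := by
  have : Fact p.Prime := ⟨hp⟩
  have hcop : Nat.Coprime 7 p := (Nat.coprime_primes (by norm_num) hp).2 hp7.symm
  have : NeZero (7 : ZMod p) := ⟨(ZMod.unitOfCoprime 7 hcop).ne_zero⟩
  have h7p : ¬7 ∣ p := (Nat.Prime.coprime_iff_not_dvd (by norm_num)).1 hcop
  rw [irreducible_cubic_seven_iff_not_exists, FiniteField.exists_cubic_seven_eq_zero_iff,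
    ZMod.card]
  omega
end

section
/- Let p be a prime number with p ≠ 3. The polynomial x³ − 3x + 1 is irreducible over the field 𝔽_p = ℤ/pℤ if and only if p is congruent to 2, 4, 5 or 7 modulo 9. (Equivalently: p is inert in the cubic field ℚ(ζ₉ + ζ₉⁻¹), the maximal real subfield of the 9th cyclotomic field, exactly for these congruence classes.) -/
/-!
Writing `β = ζ + ζ⁻¹`, one has `ζ³ (β³ - 3β + 1) = ζ⁶ + ζ³ + 1 = Φ₉(ζ)`, so over an algebraic
closure of `𝔽_p` (`p ≠ 3`) the roots of the cubic are exactly the `ζ + ζ⁻¹` with `ζ` a primitive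
9th root of unity. Such a root lies in `𝔽_p` iff Frobenius fixes it, i.e. iff `ζ ^ p = ζ ^ (±1)`,
i.e. iff `p ≡ ±1 (mod 9)`; and a cubic is irreducible iff it has no root.
-/

open Polynomial

lemma isPrimitiveRoot_nine_iff {R : Type*} [CommRing R] [IsDomain R] [NeZero (9 : R)] {ζ : R} :
    IsPrimitiveRoot ζ 9 ↔ ζ ^ 6 + ζ ^ 3 + 1 = 0 := by
  rw [← isRoot_cyclotomic_iff, show 9 = 3 ^ (1 + 1) from rfl,
    cyclotomic_prime_pow_eq_geom_sum Nat.prime_three]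
  simp only [IsRoot, Finset.sum_range_succ, Finset.sum_range_zero, eval_add, eval_zero, eval_pow,
    eval_X]
  ring_nf

section Field

variable {K : Type*} [Field K]

lemma add_inv_eq_add_inv_iff {x y : K} (hx : x ≠ 0) (hy : y ≠ 0) :
    x + x⁻¹ = y + y⁻¹ ↔ x = y ∨ x = y⁻¹ := by
  constructor
  · intro h
    have hfactor : (x - y) * (x * y - 1) = 0 := by
      field_simp at h
      linear_combination h
    rcases mul_eq_zero.mp hfactor with h | h
    · exact .inl (sub_eq_zero.mp h)
    · exact .inr (eq_inv_of_mul_eq_one_left (sub_eq_zero.mp h))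
  · rintro (rfl | rfl) <;> simp [add_comm]

lemma IsAlgClosed.exists_add_inv_eq [IsAlgClosed K] (b : K) : ∃ ζ : K, ζ ≠ 0 ∧ ζ + ζ⁻¹ = b := by
  have hdeg : (X ^ 2 - C b * X + 1 : K[X]).natDegree = 2 := by compute_degree!
  obtain ⟨ζ, hζ⟩ := IsAlgClosed.exists_root (X ^ 2 - C b * X + 1 : K[X]) (by
    rw [degree_eq_natDegree (by rintro h; simp [h] at hdeg), hdeg]; decide)
  simp only [IsRoot, eval_add, eval_sub, eval_pow, eval_mul, eval_X, eval_C, eval_one] at hζ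
  have hζ0 : ζ ≠ 0 := by rintro rfl; simp at hζ
  refine ⟨ζ, hζ0, ?_⟩
  field_simp
  linear_combination hζ

lemma pow_three_mul_cubic_add_inv {ζ : K} (hζ : ζ ≠ 0) :
    ζ ^ 3 * ((ζ + ζ⁻¹) ^ 3 - 3 * (ζ + ζ⁻¹) + 1) = ζ ^ 6 + ζ ^ 3 + 1 := by
  field_simp
  ring

lemma cubic_add_inv_eq_zero_iff [NeZero (9 : K)] {ζ : K} (hζ : ζ ≠ 0) :
    (ζ + ζ⁻¹) ^ 3 - 3 * (ζ + ζ⁻¹) + 1 = 0 ↔ IsPrimitiveRoot ζ 9 := by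
  rw [isPrimitiveRoot_nine_iff, ← pow_three_mul_cubic_add_inv hζ, mul_eq_zero,
    or_iff_right (pow_ne_zero 3 hζ)]

lemma IsPrimitiveRoot.add_inv_pow_char_eq_self_iff (p : ℕ) [Fact p.Prime] [CharP K p] {ζ : K}
    (hζ : IsPrimitiveRoot ζ 9) :
    (ζ + ζ⁻¹) ^ p = ζ + ζ⁻¹ ↔ p % 9 = 1 ∨ p % 9 = 8 := by
  have hpow_iff : ∀ j < 9, ζ ^ p = ζ ^ j ↔ p % 9 = j := fun j hj => by
    rw [← pow_mod_orderOf, ← hζ.eq_orderOf]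
    exact ⟨hζ.pow_inj (Nat.mod_lt _ (by norm_num)) hj, fun h => h ▸ rfl⟩
  have hinv : ζ⁻¹ = ζ ^ 8 := inv_eq_of_mul_eq_one_left (by rw [← pow_succ, hζ.pow_eq_one])
  have hζ0 : ζ ≠ 0 := hζ.ne_zero (by norm_num)
  rw [add_pow_char, inv_pow, add_inv_eq_add_inv_iff (pow_ne_zero p hζ0) hζ0,
    hinv, ← hpow_iff 8 (by norm_num), ← hpow_iff 1 (by norm_num), pow_one]

end Field

lemma ZMod.exists_cubic_root_iff_mod_nine (p : ℕ) [Fact p.Prime] (hp3 : p ≠ 3) :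
    (∃ b : ZMod p, b ^ 3 - 3 * b + 1 = 0) ↔ p % 9 = 1 ∨ p % 9 = 8 := by
  let F := AlgebraicClosure (ZMod p)
  let φ : ZMod p →+* F := ZMod.castHom dvd_rfl F
  have : NeZero (9 : F) := by
    refine ⟨fun h9 => hp3 ?_⟩
    have hdvd : p ∣ 3 ^ 2 := (CharP.cast_eq_zero_iff F p _).mp (by exact_mod_cast h9)
    exact (Nat.prime_dvd_prime_iff_eq Fact.out Nat.prime_three).mp
      ((Fact.out : p.Prime).dvd_of_dvd_pow hdvd)
  constructor
  · rintro ⟨b, hb⟩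
    obtain ⟨ζ, hζ0, hζb⟩ := IsAlgClosed.exists_add_inv_eq (φ b)
    have hζ : IsPrimitiveRoot ζ 9 := by
      rw [← cubic_add_inv_eq_zero_iff hζ0, hζb]
      simpa [map_ofNat] using congrArg φ hb
    rw [← hζ.add_inv_pow_char_eq_self_iff p, hζb, ← map_pow, ZMod.pow_card]
  · intro hp9
    obtain ⟨ζ, hζ⟩ := HasEnoughRootsOfUnity.exists_primitiveRoot F 9
    obtain ⟨b, hb⟩ : ζ + ζ⁻¹ ∈ φ.fieldRange := by
      rw [ZMod.fieldRange_castHom_eq_bot, Subfield.mem_bot_iff_pow_eq_self F p]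
      exact (hζ.add_inv_pow_char_eq_self_iff p).mpr hp9
    refine ⟨b, φ.injective ?_⟩
    rw [map_zero, ← (cubic_add_inv_eq_zero_iff (hζ.ne_zero (by norm_num))).mpr hζ, ← hb]
    simp [map_ofNat]

/-- The minimal polynomial of `ζ₉ + ζ₉⁻¹` is irreducible modulo a prime
`p ≠ 3` if and only if `p ≡ 2, 4, 5, 7 (mod 9)`. -/
theorem irreducible_cubic_nine
    (p : ℕ) (hp : p.Prime) (hp3 : p ≠ 3) :
    Irreducible (X ^ 3 - 3 * X + 1 : (ZMod p)[X]) ↔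
      (p % 9 = 2 ∨ p % 9 = 4 ∨ p % 9 = 5 ∨ p % 9 = 7) := by
  have := Fact.mk hp
  have hdeg : (X ^ 3 - 3 * X + 1 : (ZMod p)[X]).natDegree = 3 := by compute_degree!
  have hne : (X ^ 3 - 3 * X + 1 : (ZMod p)[X]) ≠ 0 := by rintro h; simp [h] at hdeg
  rw [irreducible_iff_roots_eq_zero_of_degree_le_three (by omega) (by omega),
    Multiset.eq_zero_iff_forall_notMem]
  simp only [mem_roots hne, IsRoot, eval_add, eval_sub, eval_mul, eval_pow, eval_X, eval_one,
    eval_ofNat]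
  rw [← not_exists, ZMod.exists_cubic_root_iff_mod_nine p hp3]
  have h3p : ¬ 3 ∣ p := fun h => hp3 ((Nat.prime_dvd_prime_iff_eq Nat.prime_three hp).mp h).symm
  omega
end
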